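/- arXiv:2305.00072 — 2 statements merged into one kernel-verified Lean document; each statement's English description precedes it below -/
import Mathlib

section
/- Let (w₁, w₂) be a classical solution of system (W) on ℝ × [0,T] and let a < b. Then for every t with 0 ≤ t < (b−a)/2 and t ≤ T, the cone energy satisfies E_{(a,b)}(t) ≤ E_{(a,b)}(0), i.e. ∫_{a+t}^{b−t} (w₁²(x,t) + w₂²(x,t)) dx ≤ ∫ₐᵇ (w₁²(x,0) + w₂²(x,0)) dx. -/
open Real Set Filter MeasureTheory

/-- The nonlinear coefficient `N(u,v) = N₀(√(u² + v²))`. -/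
noncomputable def Ncoef (N₀ : ℝ → ℝ) (u v : ℝ) : ℝ :=
  N₀ (Real.sqrt (u ^ 2 + v ^ 2))

/-- `(w₁, w₂)` is a classical solution of system (W),
`∂ₜw₁ = ∂ₓw₁ − N(w₁,w₂)·w₂`, `∂ₜw₂ = −∂ₓw₂ + N(w₁,w₂)·w₁`, on `ℝ × [0, T]`:
a pair of `C¹` functions satisfying the equations pointwise. -/
def IsSolW (N₀ : ℝ → ℝ) (T : ℝ) (w₁ w₂ : ℝ → ℝ → ℝ) : Prop :=
  ContDiffOn ℝ 1 (fun p : ℝ × ℝ => w₁ p.1 p.2) (Set.univ ×ˢ Set.Icc 0 T) ∧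
  ContDiffOn ℝ 1 (fun p : ℝ × ℝ => w₂ p.1 p.2) (Set.univ ×ˢ Set.Icc 0 T) ∧
  ∀ x : ℝ, ∀ t ∈ Set.Icc (0 : ℝ) T,
    deriv (fun s => w₁ x s) t
        = deriv (fun y => w₁ y t) x - Ncoef N₀ (w₁ x t) (w₂ x t) * w₂ x t ∧
    deriv (fun s => w₂ x s) t
        = - deriv (fun y => w₂ y t) x + Ncoef N₀ (w₁ x t) (w₂ x t) * w₁ x t

/-! The energy density `e = w₁² + w₂²` and the flux `q = w₁² − w₂²` obey the conservation law
`∂ₜe = ∂ₓq`: the coupling terms `∓2N w₁w₂` cancel. Differentiating the cone energy by the Leibniz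
rule, the edges of the cone moving at speed `1`, gives
`E'(t) = q(b−t) − q(a+t) − e(b−t) − e(a+t) = −2w₂²(b−t) − 2w₁²(a+t) ≤ 0`. -/

open Function Topology Asymptotics intervalIntegral
open scoped Interval

section ParametricIntegral

variable {F F' : ℝ → ℝ → ℝ} {s₀ : ℝ}

theorem isLittleO_integral_sub_of_continuousAt {c : ℝ → ℝ}
    (hF : ContinuousAt (uncurry F) (c s₀, s₀)) (hc : ContinuousAt c s₀) :
    (fun s => ∫ x in c s₀..c s, (F x s - F (c s₀) s₀)) =o[𝓝 s₀] fun s => c s - c s₀ := by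
  refine isLittleO_iff.2 fun ε hε => ?_
  obtain ⟨δ, hδ, hFδ⟩ := Metric.continuousAt_iff.1 hF ε hε
  filter_upwards [hc.eventually (Metric.ball_mem_nhds (c s₀) hδ), Metric.ball_mem_nhds s₀ hδ]
    with s hcs hs
  refine intervalIntegral.norm_integral_le_of_norm_le_const fun x hx => ?_
  rw [← dist_eq_norm]
  refine (hFδ (x := (x, s)) ?_).le
  refine Prod.dist_eq.trans_lt (max_lt_iff.2 ⟨?_, hs⟩)
  rw [Real.dist_eq]
  exact (abs_sub_left_of_mem_uIcc (uIoc_subset_uIcc hx)).trans_lt hcs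

theorem hasDerivAt_integral_of_continuousAt_upper {c : ℝ → ℝ} {c' : ℝ}
    (hF : ContinuousAt (uncurry F) (c s₀, s₀)) (hc : HasDerivAt c c' s₀)
    (hint : ∀ᶠ s in 𝓝 s₀, IntervalIntegrable (F · s) volume (c s₀) (c s)) :
    HasDerivAt (fun s => ∫ x in c s₀..c s, F x s) (c' * F (c s₀) s₀) s₀ := by
  set K := F (c s₀) s₀
  set D := fun s => ∫ x in c s₀..c s, (F x s - K)
  have hD : HasDerivAt D 0 s₀ := by
    rw [hasDerivAt_iff_isLittleO]
    simpa [D] using (isLittleO_integral_sub_of_continuousAt hF hc.continuousAt).trans_isBigO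
      hc.isBigO_sub
  have hsplit : (fun s => ∫ x in c s₀..c s, F x s) =ᶠ[𝓝 s₀] fun s => (c s - c s₀) * K + D s := by
    filter_upwards [hint] with s hs
    simp only [D, integral_sub hs intervalIntegrable_const, intervalIntegral.integral_const,
      smul_eq_mul]
    ring
  simpa using (((hc.sub_const _).mul_const K).add hD).congr_of_eventuallyEq hsplit

theorem hasDerivAt_integral_of_continuousOn_deriv {A B : ℝ} {V : Set ℝ} (hV : IsOpen V)
    (hs₀ : s₀ ∈ V) (hF : ∀ s ∈ V, IntervalIntegrable (F · s) volume A B)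
    (hF' : ContinuousOn (uncurry F') ([[A, B]] ×ˢ V))
    (hderiv : ∀ x ∈ [[A, B]], ∀ s ∈ V, HasDerivAt (F x ·) (F' x s) s) :
    HasDerivAt (fun s => ∫ x in A..B, F x s) (∫ x in A..B, F' x s₀) s₀ := by
  obtain ⟨ε, hε, hεV⟩ := Metric.nhds_basis_closedBall.mem_iff.1 (hV.mem_nhds hs₀)
  have hball : Metric.ball s₀ ε ⊆ V := Metric.ball_subset_closedBall.trans hεV
  obtain ⟨C, hC⟩ := (isCompact_uIcc.prod (isCompact_closedBall s₀ ε)).exists_bound_of_continuousOn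
      (hF'.mono (prod_mono subset_rfl hεV))
  have hslice : ContinuousOn (F' · s₀) [[A, B]] :=
    hF'.comp (continuous_id.prodMk continuous_const).continuousOn fun x hx => ⟨hx, hs₀⟩
  refine (hasDerivAt_integral_of_dominated_loc_of_deriv_le (F := fun s x => F x s)
    (F' := fun s x => F' x s) (bound := fun _ => C)
    (Metric.ball_mem_nhds s₀ hε) ?_ (hF s₀ hs₀) ?_ ?_ intervalIntegrable_const ?_).2
  · filter_upwards [Metric.ball_mem_nhds s₀ hε] with s hs
    exact (hF s (hball hs)).def'.aestronglyMeasurable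
  · exact (hslice.mono uIoc_subset_uIcc).aestronglyMeasurable measurableSet_uIoc
  · exact ae_of_all _ fun x hx s hs =>
      hC (x, s) ⟨uIoc_subset_uIcc hx, Metric.ball_subset_closedBall hs⟩
  · exact ae_of_all _ fun x hx s hs => hderiv x (uIoc_subset_uIcc hx) s (hball hs)

theorem hasDerivAt_integral_of_varying_bounds {α β : ℝ → ℝ} {α' β' : ℝ} {V : Set ℝ}
    (hV : IsOpen V) (hs₀ : s₀ ∈ V) (hF : ContinuousOn (uncurry F) (univ ×ˢ V))
    (hF' : ContinuousOn (uncurry F') (univ ×ˢ V))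
    (hderiv : ∀ x, ∀ s ∈ V, HasDerivAt (F x ·) (F' x s) s)
    (hα : HasDerivAt α α' s₀) (hβ : HasDerivAt β β' s₀) :
    HasDerivAt (fun s => ∫ x in α s..β s, F x s)
      ((∫ x in α s₀..β s₀, F' x s₀) + β' * F (β s₀) s₀ - α' * F (α s₀) s₀) s₀ := by
  have hint : ∀ s ∈ V, ∀ u v, IntervalIntegrable (F · s) volume u v := fun s hs u v =>
    (hF.comp_continuous (continuous_id.prodMk continuous_const)
      fun x => ⟨mem_univ x, hs⟩).intervalIntegrable u v
  have hV₀ : ∀ᶠ s in 𝓝 s₀, s ∈ V := hV.mem_nhds hs₀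
  have hcont (x : ℝ) : ContinuousAt (uncurry F) (x, s₀) :=
    hF.continuousAt (prod_mem_nhds univ_mem hV₀)
  have hsplit : (fun s => ∫ x in α s..β s, F x s) =ᶠ[𝓝 s₀] fun s =>
      (∫ x in α s₀..β s₀, F x s) + (∫ x in β s₀..β s, F x s) - ∫ x in α s₀..α s, F x s := by
    filter_upwards [hV₀] with s hs
    rw [integral_add_adjacent_intervals (hint s hs _ _) (hint s hs _ _),
      integral_interval_sub_left (hint s hs _ _) (hint s hs _ _)]
  have hfixed := hasDerivAt_integral_of_continuousOn_deriv (A := α s₀) (B := β s₀) hV hs₀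
    (fun s hs => hint s hs _ _) (hF'.mono (prod_mono (subset_univ _) subset_rfl))
    fun x _ => hderiv x
  have hupper := hasDerivAt_integral_of_continuousAt_upper (hcont _) hβ
    (hV₀.mono fun s hs => hint s hs _ _)
  have hlower := hasDerivAt_integral_of_continuousAt_upper (hcont _) hα
    (hV₀.mono fun s hs => hint s hs _ _)
  exact ((hfixed.add hupper).sub hlower).congr_of_eventuallyEq hsplit

theorem continuousOn_integral_of_continuousOn_strip {α β : ℝ → ℝ} {t₀ t₁ : ℝ} (ht : t₀ ≤ t₁)
    (hF : ContinuousOn (uncurry F) (univ ×ˢ Icc t₀ t₁)) (hα : Continuous α) (hβ : Continuous β) :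
    ContinuousOn (fun s => ∫ x in α s..β s, F x s) (Icc t₀ t₁) := by
  -- Clamping time to `[t₀, t₁]` extends `F` continuously to the whole plane, where continuity
  -- of parametric integrals is available.
  set G : ℝ → ℝ → ℝ := fun s x => F x (projIcc t₀ t₁ ht s)
  have hG : Continuous (uncurry G) :=
    hF.comp_continuous (continuous_snd.prodMk (continuous_subtype_val.comp
      ((continuous_projIcc (h := ht)).comp continuous_fst)))
      fun p => ⟨mem_univ _, (projIcc t₀ t₁ ht p.1).2⟩
  have hint (s u v : ℝ) : IntervalIntegrable (G s) volume u v :=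
    (hG.comp (continuous_const.prodMk continuous_id)).intervalIntegrable u v
  have hsplit : (fun s => (∫ x in 0..β s, G s x) - ∫ x in 0..α s, G s x) =
      fun s => ∫ x in α s..β s, G s x :=
    funext fun s => integral_interval_sub_left (hint s 0 _) (hint s 0 _)
  have hcont : Continuous fun s => ∫ x in α s..β s, G s x := by
    rw [← hsplit]
    exact (continuous_parametric_intervalIntegral_of_continuous hG hβ).sub
      (continuous_parametric_intervalIntegral_of_continuous hG hα)
  refine hcont.continuousOn.congr fun s hs => ?_
  simp only [G, projIcc_of_mem ht hs]

end ParametricIntegral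

theorem antitoneOn_integral_cone_of_conservation {e q g : ℝ → ℝ → ℝ} {a b T : ℝ} (hT : 0 ≤ T)
    (he : ContinuousOn (uncurry e) (univ ×ˢ Icc 0 T))
    (hg : ContinuousOn (uncurry g) (univ ×ˢ Ioo 0 T))
    (he_t : ∀ x, ∀ s ∈ Ioo 0 T, HasDerivAt (e x ·) (g x s) s)
    (hq_x : ∀ x, ∀ s ∈ Ioo 0 T, HasDerivAt (q · s) (g x s) x)
    (hqe : ∀ x, ∀ s ∈ Ioo 0 T, |q x s| ≤ e x s) :
    AntitoneOn (fun s => ∫ x in a + s..b - s, e x s) (Icc 0 T) := by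
  have hderiv : ∀ s ∈ Ioo 0 T, HasDerivAt (fun s => ∫ x in a + s..b - s, e x s)
      (q (b - s) s - q (a + s) s - e (b - s) s - e (a + s) s) s := by
    intro s hs
    have hflux : ∫ x in a + s..b - s, g x s = q (b - s) s - q (a + s) s :=
      integral_eq_sub_of_hasDerivAt (fun x _ => hq_x x s hs)
        ((hg.comp_continuous (continuous_id.prodMk continuous_const)
          fun x => ⟨mem_univ x, hs⟩).intervalIntegrable _ _)
    convert hasDerivAt_integral_of_varying_bounds isOpen_Ioo hs
      (he.mono (prod_mono subset_rfl Ioo_subset_Icc_self)) hg he_t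
      ((hasDerivAt_id' s).const_add a) ((hasDerivAt_id' s).const_sub b) using 1
    rw [hflux]
    ring
  rw [← interior_Icc] at hderiv
  refine antitoneOn_of_hasDerivWithinAt_nonpos (convex_Icc 0 T)
    (continuousOn_integral_of_continuousOn_strip hT he (by fun_prop) (by fun_prop))
    (fun s hs => (hderiv s hs).hasDerivWithinAt) fun s hs => ?_
  rw [interior_Icc] at hs
  linarith [le_abs_self (q (b - s) s), neg_abs_le (q (a + s) s), hqe (b - s) s hs,
    hqe (a + s) s hs]

section SliceDerivatives

variable {w : ℝ → ℝ → ℝ} {U : Set (ℝ × ℝ)}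

theorem hasDerivAt_left_of_contDiffOn (hw : ContDiffOn ℝ 1 (uncurry w) U) (hU : IsOpen U)
    {x t : ℝ} (hxt : (x, t) ∈ U) :
    HasDerivAt (w · t) (fderiv ℝ (uncurry w) (x, t) (1, 0)) x :=
  (((hw.differentiableOn one_ne_zero).differentiableAt (hU.mem_nhds hxt)).hasFDerivAt
    |>.comp_hasDerivAt x ((hasDerivAt_id' x).prodMk (hasDerivAt_const x t)) :)

theorem hasDerivAt_right_of_contDiffOn (hw : ContDiffOn ℝ 1 (uncurry w) U) (hU : IsOpen U)
    {x t : ℝ} (hxt : (x, t) ∈ U) :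
    HasDerivAt (w x ·) (fderiv ℝ (uncurry w) (x, t) (0, 1)) t :=
  (((hw.differentiableOn one_ne_zero).differentiableAt (hU.mem_nhds hxt)).hasFDerivAt
    |>.comp_hasDerivAt t ((hasDerivAt_const t x).prodMk (hasDerivAt_id' t)) :)

theorem continuousOn_deriv_left_of_contDiffOn (hw : ContDiffOn ℝ 1 (uncurry w) U)
    (hU : IsOpen U) : ContinuousOn (fun p : ℝ × ℝ => deriv (w · p.2) p.1) U :=
  ((hw.continuousOn_fderiv_of_isOpen hU le_rfl).clm_apply continuousOn_const).congr
    fun _ hp => (hasDerivAt_left_of_contDiffOn hw hU hp).deriv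

end SliceDerivatives

noncomputable def energyRate (w₁ w₂ : ℝ → ℝ → ℝ) (x t : ℝ) : ℝ :=
  2 * w₁ x t * deriv (w₁ · t) x - 2 * w₂ x t * deriv (w₂ · t) x

namespace IsSolW

variable {N₀ : ℝ → ℝ} {T : ℝ} {w₁ w₂ : ℝ → ℝ → ℝ}

theorem contDiffOn_interior (h : IsSolW N₀ T w₁ w₂) :
    ContDiffOn ℝ 1 (uncurry w₁) (univ ×ˢ Ioo 0 T) ∧
      ContDiffOn ℝ 1 (uncurry w₂) (univ ×ˢ Ioo 0 T) :=
  ⟨h.1.mono (prod_mono subset_rfl Ioo_subset_Icc_self),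
    h.2.1.mono (prod_mono subset_rfl Ioo_subset_Icc_self)⟩

theorem hasDerivAt_flux (h : IsSolW N₀ T w₁ w₂) (x : ℝ) {t : ℝ} (ht : t ∈ Ioo 0 T) :
    HasDerivAt (fun y => w₁ y t ^ 2 - w₂ y t ^ 2) (energyRate w₁ w₂ x t) x := by
  have hU : IsOpen ((univ : Set ℝ) ×ˢ Ioo 0 T) := isOpen_univ.prod isOpen_Ioo
  have h₁ := hasDerivAt_left_of_contDiffOn h.contDiffOn_interior.1 hU ⟨mem_univ x, ht⟩
  have h₂ := hasDerivAt_left_of_contDiffOn h.contDiffOn_interior.2 hU ⟨mem_univ x, ht⟩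
  refine ((h₁.pow 2).sub (h₂.pow 2)).congr_deriv ?_
  simp only [energyRate, h₁.deriv, h₂.deriv]
  ring

theorem hasDerivAt_energyDensity (h : IsSolW N₀ T w₁ w₂) (x : ℝ) {t : ℝ} (ht : t ∈ Ioo 0 T) :
    HasDerivAt (fun s => w₁ x s ^ 2 + w₂ x s ^ 2) (energyRate w₁ w₂ x t) t := by
  have hU : IsOpen ((univ : Set ℝ) ×ˢ Ioo 0 T) := isOpen_univ.prod isOpen_Ioo
  have h₁ := hasDerivAt_right_of_contDiffOn h.contDiffOn_interior.1 hU ⟨mem_univ x, ht⟩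
  have h₂ := hasDerivAt_right_of_contDiffOn h.contDiffOn_interior.2 hU ⟨mem_univ x, ht⟩
  obtain ⟨hpde₁, hpde₂⟩ := h.2.2 x t (Ioo_subset_Icc_self ht)
  refine ((h₁.pow 2).add (h₂.pow 2)).congr_deriv ?_
  rw [← h₁.deriv, ← h₂.deriv, hpde₁, hpde₂, energyRate]
  ring

theorem continuousOn_energyRate (h : IsSolW N₀ T w₁ w₂) :
    ContinuousOn (uncurry (energyRate w₁ w₂)) (univ ×ˢ Ioo 0 T) := by
  have hU : IsOpen ((univ : Set ℝ) ×ˢ Ioo 0 T) := isOpen_univ.prod isOpen_Ioo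
  obtain ⟨h₁, h₂⟩ := h.contDiffOn_interior
  exact ((continuousOn_const.mul h₁.continuousOn).mul
    (continuousOn_deriv_left_of_contDiffOn h₁ hU)).sub
    ((continuousOn_const.mul h₂.continuousOn).mul (continuousOn_deriv_left_of_contDiffOn h₂ hU))

theorem continuousOn_energyDensity (h : IsSolW N₀ T w₁ w₂) :
    ContinuousOn (uncurry fun x t => w₁ x t ^ 2 + w₂ x t ^ 2) (univ ×ˢ Icc 0 T) :=
  (h.1.continuousOn.pow 2).add (h.2.1.continuousOn.pow 2)

end IsSolW

theorem stmt8_general (N₀ : ℝ → ℝ) (T : ℝ) (w₁ w₂ : ℝ → ℝ → ℝ)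
    (h : IsSolW N₀ T w₁ w₂) (a b : ℝ) :
    ∀ t : ℝ, 0 ≤ t → t < (b - a) / 2 → t ≤ T →
      (∫ x in (a + t)..(b - t), (w₁ x t ^ 2 + w₂ x t ^ 2))
        ≤ ∫ x in a..b, (w₁ x 0 ^ 2 + w₂ x 0 ^ 2) := by
  intro t ht₀ _ htT
  have hT : 0 ≤ T := ht₀.trans htT
  have hcone := antitoneOn_integral_cone_of_conservation (a := a) (b := b) hT
    h.continuousOn_energyDensity h.continuousOn_energyRate
    (fun x _ hs => h.hasDerivAt_energyDensity x hs) (fun x _ hs => h.hasDerivAt_flux x hs)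
    fun x s _ => abs_le.2 ⟨by linarith [sq_nonneg (w₁ x s)], by linarith [sq_nonneg (w₂ x s)]⟩
  simpa using hcone ⟨le_rfl, hT⟩ ⟨ht₀, htT⟩ ht₀

/-- for a classical solution of system (W) and `a < b`, the cone
energy decreases from its initial value: for `0 ≤ t < (b−a)/2`, `t ≤ T`,
`∫_{a+t}^{b−t} (w₁²(·,t) + w₂²(·,t)) ≤ ∫ₐᵇ (w₁²(·,0) + w₂²(·,0))`. -/
theorem stmt8 (N₀ : ℝ → ℝ) (T : ℝ) (w₁ w₂ : ℝ → ℝ → ℝ)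
    (h : IsSolW N₀ T w₁ w₂) (a b : ℝ) (hab : a < b) :
    ∀ t : ℝ, 0 ≤ t → t < (b - a) / 2 → t ≤ T →
      (∫ x in (a + t)..(b - t), (w₁ x t ^ 2 + w₂ x t ^ 2))
        ≤ ∫ x in a..b, (w₁ x 0 ^ 2 + w₂ x 0 ^ 2) :=
  stmt8_general N₀ T w₁ w₂ h a b
end

section
/- L² stability of perturbed solutions: suppose z₁(u,v) = N(u,v)·u and z₂(u,v) = N(u,v)·v are globally Lipschitz on ℝ² with Lipschitz constant L (with respect to the Euclidean norm). Let (w₁, w₂) and (ŵ₁, ŵ₂) be two classical solutions of system (W) on ℝ × [0,T] whose differences eᵢ = wᵢ − ŵᵢ satisfy: for each t, x ↦ eᵢ(x,t)² is integrable, eᵢ(x,t) → 0 as |x| → ∞, and on each compact time interval |eᵢ·∂ₜeᵢ| is dominated by an integrable function of x. Then there exists a constant C depending only on L such that ∫_ℝ (e₁²(x,t) + e₂²(x,t)) dx ≤ e^{Ct} · ∫_ℝ (e₁²(x,0) + e₂²(x,0)) dx for all t ∈ [0,T]. -/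
/-!
For the difference `e = w - v` of two solutions, the error system reads
`∂ₜe₁ = ∂ₓe₁ - Δz₂`, `∂ₜe₂ = -∂ₓe₂ + Δz₁`, where `Δzᵢ = zᵢ(w) - zᵢ(v)`. Multiplying by
`e₁, e₂` and integrating in `x`, the transport terms combine into `½ ∂ₓ(e₁² - e₂²)`, whose
integral vanishes by the decay at `±∞`, while the Lipschitz bound gives
`|e₂ Δz₁ - e₁ Δz₂| ≤ 2L (e₁² + e₂²)`. So the energy `E(t) = ∫ (e₁² + e₂²)` satisfies
`E' ≤ 4L E` on `(0, T)`, and Grönwall gives the estimate with `C = 4L`. The integrable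
majorant of `eᵢ ∂ₜeᵢ` is what allows differentiating `E` under the integral sign and proves
its continuity up to the endpoints.
-/

open Real Set Filter MeasureTheory

section Slices

variable {a b : ℝ} {u : ℝ → ℝ → ℝ}

theorem differentiableAt_of_contDiffOn_univ_prod_Icc
    (hu : ContDiffOn ℝ 1 (fun p : ℝ × ℝ => u p.1 p.2) (univ ×ˢ Icc a b))
    {s : ℝ} (hs : s ∈ Ioo a b) (x : ℝ) :
    DifferentiableAt ℝ (fun p : ℝ × ℝ => u p.1 p.2) (x, s) :=
  (hu.differentiableOn one_ne_zero).differentiableAt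
    (prod_mem_nhds univ_mem (Icc_mem_nhds hs.1 hs.2))

theorem hasDerivAt_time_slice
    (hu : ContDiffOn ℝ 1 (fun p : ℝ × ℝ => u p.1 p.2) (univ ×ˢ Icc a b))
    {s : ℝ} (hs : s ∈ Ioo a b) (x : ℝ) :
    HasDerivAt (fun s => u x s) (deriv (fun s => u x s) s) s :=
  ((differentiableAt_of_contDiffOn_univ_prod_Icc hu hs x).comp s
    ((differentiableAt_const x).prodMk differentiableAt_id)).hasDerivAt

theorem hasDerivAt_space_slice
    (hu : ContDiffOn ℝ 1 (fun p : ℝ × ℝ => u p.1 p.2) (univ ×ˢ Icc a b))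
    {s : ℝ} (hs : s ∈ Ioo a b) (x : ℝ) :
    HasDerivAt (fun y => u y s) (deriv (fun y => u y s) x) x := by
  have h := (differentiableAt_of_contDiffOn_univ_prod_Icc hu hs x).comp x
    ((differentiableAt_id (𝕜 := ℝ) (x := x)).prodMk (differentiableAt_const s))
  exact h.hasDerivAt

theorem continuous_space_slice
    (hu : ContDiffOn ℝ 1 (fun p : ℝ × ℝ => u p.1 p.2) (univ ×ˢ Icc a b))
    {s : ℝ} (hs : s ∈ Icc a b) : Continuous fun x => u x s :=
  hu.continuousOn.comp_continuous (continuous_id.prodMk continuous_const)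
    fun x => ⟨mem_univ x, hs⟩

theorem continuousOn_time_slice
    (hu : ContDiffOn ℝ 1 (fun p : ℝ × ℝ => u p.1 p.2) (univ ×ˢ Icc a b)) (x : ℝ) :
    ContinuousOn (fun s => u x s) (Icc a b) :=
  hu.continuousOn.comp (continuous_const.prodMk continuous_id).continuousOn
    fun _ hs => ⟨mem_univ x, hs⟩

theorem continuous_deriv_time_slice
    (hu : ContDiffOn ℝ 1 (fun p : ℝ × ℝ => u p.1 p.2) (univ ×ˢ Icc a b))
    {s : ℝ} (hs : s ∈ Ioo a b) : Continuous fun x => deriv (fun s => u x s) s := by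
  set U : ℝ × ℝ → ℝ := fun p => u p.1 p.2
  have hfderiv : ContinuousOn (fderiv ℝ U) (univ ×ˢ Ioo a b) :=
    (hu.mono (prod_mono_right Ioo_subset_Icc_self)).continuousOn_fderiv_of_isOpen
      (isOpen_univ.prod isOpen_Ioo) le_rfl
  have hslice : Continuous fun x => fderiv ℝ U (x, s) (0, 1) :=
    (ContinuousLinearMap.apply ℝ ℝ ((0, 1) : ℝ × ℝ)).continuous.comp
      (hfderiv.comp_continuous (continuous_id.prodMk continuous_const) fun x => ⟨mem_univ x, hs⟩)
  refine hslice.congr fun x => ?_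
  exact (((differentiableAt_of_contDiffOn_univ_prod_Icc hu hs x).hasFDerivAt).comp_hasDerivAt s
    ((hasDerivAt_const s x).prodMk (hasDerivAt_id s))).deriv.symm

end Slices

theorem le_exp_mul_of_hasDerivAt_le_mul {f f' : ℝ → ℝ} {a b C : ℝ}
    (hf : ContinuousOn f (Icc a b)) (hf' : ∀ s ∈ Ioo a b, HasDerivAt f (f' s) s)
    (hle : ∀ s ∈ Ioo a b, f' s ≤ C * f s) {t : ℝ} (ht : t ∈ Icc a b) :
    f t ≤ exp (C * (t - a)) * f a := by
  have hanti : AntitoneOn (fun s => exp (-(C * (s - a))) * f s) (Icc a b) := by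
    refine antitoneOn_of_hasDerivWithinAt_nonpos (convex_Icc a b)
      ((continuous_exp.comp_continuousOn (by fun_prop)).mul hf)
      (f' := fun s => exp (-(C * (s - a))) * (f' s - C * f s)) ?_ ?_
    · intro s hs
      rw [interior_Icc] at hs
      have hexp : HasDerivAt (fun s => exp (-(C * (s - a)))) (exp (-(C * (s - a))) * -C) s := by
        simpa using ((((hasDerivAt_id s).sub_const a).const_mul C).neg).exp
      exact ((hexp.mul (hf' s hs)).congr_deriv (by ring)).hasDerivWithinAt
    · intro s hs
      rw [interior_Icc] at hs
      exact mul_nonpos_of_nonneg_of_nonpos (exp_pos _).le (sub_nonpos.2 (hle s hs))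
  have h := hanti ⟨le_rfl, ht.1.trans ht.2⟩ ht ht.1
  simp only [sub_self, mul_zero, neg_zero, exp_zero, one_mul] at h
  calc f t = exp (C * (t - a)) * (exp (-(C * (t - a))) * f t) := by
        rw [← mul_assoc, ← exp_add, add_neg_cancel, exp_zero, one_mul]
    _ ≤ exp (C * (t - a)) * f a := mul_le_mul_of_nonneg_left h (exp_pos _).le

theorem abs_mul_add_mul_le_of_abs_le_mul_sqrt {x y d₁ d₂ L : ℝ}
    (h₁ : |d₁| ≤ L * √(x ^ 2 + y ^ 2)) (h₂ : |d₂| ≤ L * √(x ^ 2 + y ^ 2)) :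
    |x * d₁ + y * d₂| ≤ 2 * L * (x ^ 2 + y ^ 2) := by
  have hx : |x| ≤ √(x ^ 2 + y ^ 2) := abs_le_sqrt (by nlinarith)
  have hy : |y| ≤ √(x ^ 2 + y ^ 2) := abs_le_sqrt (by nlinarith)
  have hLr : 0 ≤ L * √(x ^ 2 + y ^ 2) := (abs_nonneg _).trans h₁
  calc |x * d₁ + y * d₂| ≤ |x| * |d₁| + |y| * |d₂| := by
        rw [← abs_mul, ← abs_mul]; exact abs_add_le _ _
    _ ≤ √(x ^ 2 + y ^ 2) * (L * √(x ^ 2 + y ^ 2)) + √(x ^ 2 + y ^ 2) * (L * √(x ^ 2 + y ^ 2)) := by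
        gcongr
    _ = 2 * L * (√(x ^ 2 + y ^ 2) * √(x ^ 2 + y ^ 2)) := by ring
    _ = 2 * L * (x ^ 2 + y ^ 2) := by rw [mul_self_sqrt (by positivity)]

section Energy

variable {a b : ℝ} {u : ℝ → ℝ → ℝ} {g : ℝ → ℝ}

theorem hasDerivAt_sq_time_slice
    (hu : ContDiffOn ℝ 1 (fun p : ℝ × ℝ => u p.1 p.2) (univ ×ˢ Icc a b))
    {s : ℝ} (hs : s ∈ Ioo a b) (x : ℝ) :
    HasDerivAt (fun s => u x s ^ 2) (2 * u x s * deriv (fun s => u x s) s) s :=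
  ((hasDerivAt_time_slice hu hs x).pow 2).congr_deriv (by ring)

theorem sq_time_slice_le
    (hu : ContDiffOn ℝ 1 (fun p : ℝ × ℝ => u p.1 p.2) (univ ×ˢ Icc a b))
    (hg : ∀ x, ∀ s ∈ Ioo a b, |u x s * deriv (fun s => u x s) s| ≤ g x)
    {s : ℝ} (hs : s ∈ Icc a b) (x : ℝ) :
    u x s ^ 2 ≤ u x a ^ 2 + 2 * |g x| * (b - a) := by
  have hba : 0 ≤ 2 * |g x| * (b - a) := by nlinarith [abs_nonneg (g x), hs.1.trans hs.2]
  rcases hs.1.eq_or_lt with rfl | has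
  · linarith
  obtain ⟨c, hc, hslope⟩ := exists_hasDerivAt_eq_slope (fun s => u x s ^ 2) _ has
    (((continuousOn_time_slice hu x).mono (Icc_subset_Icc le_rfl hs.2)).pow 2)
    fun c hc => hasDerivAt_sq_time_slice hu ⟨hc.1, hc.2.trans_le hs.2⟩ x
  rw [eq_div_iff (sub_pos.2 has).ne'] at hslope
  have hgc := (le_abs_self _).trans ((hg x c ⟨hc.1, hc.2.trans_le hs.2⟩).trans (le_abs_self (g x)))
  nlinarith [mul_le_mul_of_nonneg_right hgc (sub_pos.2 has).le, abs_nonneg (g x), hs.2]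

theorem continuousOn_integral_sq
    (hu : ContDiffOn ℝ 1 (fun p : ℝ × ℝ => u p.1 p.2) (univ ×ˢ Icc a b))
    (hint : ∀ s ∈ Icc a b, Integrable fun x => u x s ^ 2) (hg_int : Integrable g)
    (hg : ∀ x, ∀ s ∈ Ioo a b, |u x s * deriv (fun s => u x s) s| ≤ g x) :
    ContinuousOn (fun s => ∫ x, u x s ^ 2) (Icc a b) := by
  rcases le_or_gt a b with hab | hab
  · refine continuousOn_of_dominated (bound := fun x => u x a ^ 2 + 2 * |g x| * (b - a))
      (fun s hs => (hint s hs).aestronglyMeasurable) (fun s hs => ?_)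
      ((hint a ⟨le_rfl, hab⟩).add ((hg_int.abs.const_mul 2).mul_const _))
      (ae_of_all _ fun x => (continuousOn_time_slice hu x).pow 2)
    refine ae_of_all _ fun x => ?_
    rw [norm_of_nonneg (sq_nonneg _)]
    exact sq_time_slice_le hu hg hs x
  · simp [Icc_eq_empty_of_lt hab]

theorem integrable_mul_deriv_time_slice
    (hu : ContDiffOn ℝ 1 (fun p : ℝ × ℝ => u p.1 p.2) (univ ×ˢ Icc a b)) (hg_int : Integrable g)
    (hg : ∀ x, ∀ s ∈ Ioo a b, |u x s * deriv (fun s => u x s) s| ≤ g x)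
    {s : ℝ} (hs : s ∈ Ioo a b) :
    Integrable fun x => u x s * deriv (fun s => u x s) s :=
  hg_int.mono'
    ((continuous_space_slice hu (Ioo_subset_Icc_self hs)).mul
      (continuous_deriv_time_slice hu hs)).aestronglyMeasurable
    (ae_of_all _ fun x => hg x s hs)

theorem hasDerivAt_integral_sq
    (hu : ContDiffOn ℝ 1 (fun p : ℝ × ℝ => u p.1 p.2) (univ ×ˢ Icc a b))
    (hint : ∀ s ∈ Icc a b, Integrable fun x => u x s ^ 2) (hg_int : Integrable g)
    (hg : ∀ x, ∀ s ∈ Ioo a b, |u x s * deriv (fun s => u x s) s| ≤ g x)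
    {s : ℝ} (hs : s ∈ Ioo a b) :
    HasDerivAt (fun s => ∫ x, u x s ^ 2) (2 * ∫ x, u x s * deriv (fun s => u x s) s) s := by
  have hnhds : Ioo a b ∈ nhds s := Ioo_mem_nhds hs.1 hs.2
  simp_rw [← integral_const_mul, ← mul_assoc]
  refine (hasDerivAt_integral_of_dominated_loc_of_deriv_le (bound := fun x => 2 * g x) hnhds
    (eventually_of_mem hnhds fun r hr => (hint r (Ioo_subset_Icc_self hr)).aestronglyMeasurable)
    (hint s (Ioo_subset_Icc_self hs)) ?_ ?_ (hg_int.const_mul 2)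
    (ae_of_all _ fun x r hr => hasDerivAt_sq_time_slice hu hr x)).2
  · simp_rw [mul_assoc]
    exact ((integrable_mul_deriv_time_slice hu hg_int hg hs).const_mul 2).aestronglyMeasurable
  · refine ae_of_all _ fun x r hr => ?_
    rw [mul_assoc, norm_mul, Real.norm_two, Real.norm_eq_abs]
    exact mul_le_mul_of_nonneg_left (hg x r hr) zero_le_two

end Energy

theorem integral_mul_add_mul_le_of_transport {e₁ e₂ τ₁ τ₂ f₁ f₂ : ℝ → ℝ} {K : ℝ}
    (hd₁ : Differentiable ℝ e₁) (hd₂ : Differentiable ℝ e₂)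
    (heq₁ : ∀ x, τ₁ x = deriv e₁ x + f₁ x) (heq₂ : ∀ x, τ₂ x = -deriv e₂ x + f₂ x)
    (hf : ∀ x, |e₁ x * f₁ x + e₂ x * f₂ x| ≤ K * (e₁ x ^ 2 + e₂ x ^ 2))
    (hint₁ : Integrable fun x => e₁ x ^ 2) (hint₂ : Integrable fun x => e₂ x ^ 2)
    (hτ₁ : Integrable fun x => e₁ x * τ₁ x) (hτ₂ : Integrable fun x => e₂ x * τ₂ x)
    (htop₁ : Tendsto e₁ atTop (nhds 0)) (hbot₁ : Tendsto e₁ atBot (nhds 0))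
    (htop₂ : Tendsto e₂ atTop (nhds 0)) (hbot₂ : Tendsto e₂ atBot (nhds 0)) :
    (∫ x, e₁ x * τ₁ x) + ∫ x, e₂ x * τ₂ x ≤ K * ((∫ x, e₁ x ^ 2) + ∫ x, e₂ x ^ 2) := by
  set q : ℝ → ℝ := fun x => e₁ x * deriv e₁ x - e₂ x * deriv e₂ x
  set r : ℝ → ℝ := fun x => e₁ x * f₁ x + e₂ x * f₂ x
  have hsplit : ∀ x, e₁ x * τ₁ x + e₂ x * τ₂ x = q x + r x := fun x => by
    simp only [q, r, heq₁, heq₂]; ring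
  have hτ := hτ₁.add hτ₂
  have hr : Integrable r := by
    refine ((hint₁.add hint₂).const_mul K).mono' ?_ (ae_of_all _ hf)
    have hq : Measurable q := (hd₁.continuous.measurable.mul (measurable_deriv e₁)).sub
      (hd₂.continuous.measurable.mul (measurable_deriv e₂))
    refine (hτ.aestronglyMeasurable.sub hq.aestronglyMeasurable).congr (ae_of_all _ fun x => ?_)
    simp only [Pi.add_apply, Pi.sub_apply, hsplit]; ring
  have hq : Integrable q := (hτ.sub hr).congr (ae_of_all _ fun x => by
    simp only [Pi.add_apply, Pi.sub_apply, hsplit]; ring)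
  -- `q` is half the derivative of `e₁² - e₂²`, which vanishes at `±∞`.
  have hq_zero : ∫ x, q x = 0 := by
    have h := integral_of_hasDerivAt_of_tendsto (f := fun x => e₁ x ^ 2 - e₂ x ^ 2)
      (fun x => (((hd₁ x).hasDerivAt.pow 2).sub ((hd₂ x).hasDerivAt.pow 2)).congr_deriv
        (by simp only [q]; ring))
      (hq.const_mul 2) (by simpa using (hbot₁.pow 2).sub (hbot₂.pow 2))
      (by simpa using (htop₁.pow 2).sub (htop₂.pow 2))
    rw [integral_const_mul, sub_zero] at h
    linarith
  calc (∫ x, e₁ x * τ₁ x) + ∫ x, e₂ x * τ₂ x = ∫ x, r x := by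
        rw [← integral_add hτ₁ hτ₂]; simp_rw [hsplit]; rw [integral_add hq hr, hq_zero, zero_add]
    _ ≤ ∫ x, K * (e₁ x ^ 2 + e₂ x ^ 2) :=
        integral_mono hr ((hint₁.add hint₂).const_mul K) fun x => (le_abs_self _).trans (hf x)
    _ = K * ((∫ x, e₁ x ^ 2) + ∫ x, e₂ x ^ 2) := by
        rw [integral_const_mul, integral_add hint₁ hint₂]

theorem integral_sq_add_sq_le_exp_mul {a b K : ℝ} {e₁ e₂ f₁ f₂ : ℝ → ℝ → ℝ} {g : ℝ → ℝ}
    (he₁ : ContDiffOn ℝ 1 (fun p : ℝ × ℝ => e₁ p.1 p.2) (univ ×ˢ Icc a b))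
    (he₂ : ContDiffOn ℝ 1 (fun p : ℝ × ℝ => e₂ p.1 p.2) (univ ×ˢ Icc a b))
    (heq₁ : ∀ x, ∀ s ∈ Ioo a b,
      deriv (fun s => e₁ x s) s = deriv (fun y => e₁ y s) x + f₁ x s)
    (heq₂ : ∀ x, ∀ s ∈ Ioo a b,
      deriv (fun s => e₂ x s) s = -deriv (fun y => e₂ y s) x + f₂ x s)
    (hf : ∀ x, ∀ s ∈ Ioo a b,
      |e₁ x s * f₁ x s + e₂ x s * f₂ x s| ≤ K * (e₁ x s ^ 2 + e₂ x s ^ 2))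
    (hint : ∀ s ∈ Icc a b, Integrable (fun x => e₁ x s ^ 2) ∧ Integrable (fun x => e₂ x s ^ 2))
    (hdecay : ∀ s ∈ Ioo a b,
      Tendsto (fun x => e₁ x s) atTop (nhds 0) ∧ Tendsto (fun x => e₁ x s) atBot (nhds 0) ∧
      Tendsto (fun x => e₂ x s) atTop (nhds 0) ∧ Tendsto (fun x => e₂ x s) atBot (nhds 0))
    (hg_int : Integrable g)
    (hg : ∀ x, ∀ s ∈ Ioo a b,
      |e₁ x s * deriv (fun s => e₁ x s) s| + |e₂ x s * deriv (fun s => e₂ x s) s| ≤ g x)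
    {t : ℝ} (ht : t ∈ Icc a b) :
    ∫ x, (e₁ x t ^ 2 + e₂ x t ^ 2) ≤ exp (2 * K * (t - a)) * ∫ x, (e₁ x a ^ 2 + e₂ x a ^ 2) := by
  have hg₁ : ∀ x, ∀ s ∈ Ioo a b, |e₁ x s * deriv (fun s => e₁ x s) s| ≤ g x :=
    fun x s hs => (le_add_of_nonneg_right (abs_nonneg _)).trans (hg x s hs)
  have hg₂ : ∀ x, ∀ s ∈ Ioo a b, |e₂ x s * deriv (fun s => e₂ x s) s| ≤ g x :=
    fun x s hs => (le_add_of_nonneg_left (abs_nonneg _)).trans (hg x s hs)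
  have ha : a ∈ Icc a b := ⟨le_rfl, ht.1.trans ht.2⟩
  rw [integral_add (hint t ht).1 (hint t ht).2, integral_add (hint a ha).1 (hint a ha).2]
  refine le_exp_mul_of_hasDerivAt_le_mul
    ((continuousOn_integral_sq he₁ (fun s hs => (hint s hs).1) hg_int hg₁).add
      (continuousOn_integral_sq he₂ (fun s hs => (hint s hs).2) hg_int hg₂))
    (fun s hs => (hasDerivAt_integral_sq he₁ (fun s hs => (hint s hs).1) hg_int hg₁ hs).add
      (hasDerivAt_integral_sq he₂ (fun s hs => (hint s hs).2) hg_int hg₂ hs))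
    (fun s hs => ?_) ht
  obtain ⟨htop₁, hbot₁, htop₂, hbot₂⟩ := hdecay s hs
  have h := integral_mul_add_mul_le_of_transport
    (fun y => (hasDerivAt_space_slice he₁ hs y).differentiableAt)
    (fun y => (hasDerivAt_space_slice he₂ hs y).differentiableAt)
    (fun x => heq₁ x s hs) (fun x => heq₂ x s hs) (fun x => hf x s hs)
    (hint s (Ioo_subset_Icc_self hs)).1 (hint s (Ioo_subset_Icc_self hs)).2
    (integrable_mul_deriv_time_slice he₁ hg_int hg₁ hs)
    (integrable_mul_deriv_time_slice he₂ hg_int hg₂ hs) htop₁ hbot₁ htop₂ hbot₂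
  simp only [Pi.add_apply]
  linarith

theorem IsSolW.deriv_sub_eq {N₀ : ℝ → ℝ} {T : ℝ} {w₁ w₂ v₁ v₂ : ℝ → ℝ → ℝ}
    (hw : IsSolW N₀ T w₁ w₂) (hv : IsSolW N₀ T v₁ v₂) {s : ℝ} (hs : s ∈ Ioo 0 T) (x : ℝ) :
    deriv (fun s => w₁ x s - v₁ x s) s = deriv (fun y => w₁ y s - v₁ y s) x
        + -(Ncoef N₀ (w₁ x s) (w₂ x s) * w₂ x s - Ncoef N₀ (v₁ x s) (v₂ x s) * v₂ x s) ∧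
    deriv (fun s => w₂ x s - v₂ x s) s = -deriv (fun y => w₂ y s - v₂ y s) x
        + (Ncoef N₀ (w₁ x s) (w₂ x s) * w₁ x s - Ncoef N₀ (v₁ x s) (v₂ x s) * v₁ x s) := by
  obtain ⟨hw₁, hw₂, hw_eq⟩ := hw
  obtain ⟨hv₁, hv₂, hv_eq⟩ := hv
  rw [deriv_fun_sub (hasDerivAt_time_slice hw₁ hs x).differentiableAt
      (hasDerivAt_time_slice hv₁ hs x).differentiableAt,
    deriv_fun_sub (hasDerivAt_time_slice hw₂ hs x).differentiableAt
      (hasDerivAt_time_slice hv₂ hs x).differentiableAt,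
    deriv_fun_sub (hasDerivAt_space_slice hw₁ hs x).differentiableAt
      (hasDerivAt_space_slice hv₁ hs x).differentiableAt,
    deriv_fun_sub (hasDerivAt_space_slice hw₂ hs x).differentiableAt
      (hasDerivAt_space_slice hv₂ hs x).differentiableAt,
    (hw_eq x s (Ioo_subset_Icc_self hs)).1, (hw_eq x s (Ioo_subset_Icc_self hs)).2,
    (hv_eq x s (Ioo_subset_Icc_self hs)).1, (hv_eq x s (Ioo_subset_Icc_self hs)).2]
  constructor <;> ring

theorem stmt11_general (L : ℝ) :
    ∃ C : ℝ, ∀ N₀ : ℝ → ℝ,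
      (∀ p q : ℝ × ℝ,
        |Ncoef N₀ p.1 p.2 * p.1 - Ncoef N₀ q.1 q.2 * q.1|
          ≤ L * Real.sqrt ((p.1 - q.1) ^ 2 + (p.2 - q.2) ^ 2)) →
      (∀ p q : ℝ × ℝ,
        |Ncoef N₀ p.1 p.2 * p.2 - Ncoef N₀ q.1 q.2 * q.2|
          ≤ L * Real.sqrt ((p.1 - q.1) ^ 2 + (p.2 - q.2) ^ 2)) →
      ∀ (T : ℝ) (w₁ w₂ v₁ v₂ : ℝ → ℝ → ℝ),
        IsSolW N₀ T w₁ w₂ → IsSolW N₀ T v₁ v₂ →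
        (∀ t ∈ Set.Icc (0 : ℝ) T,
          Integrable (fun x => (w₁ x t - v₁ x t) ^ 2) ∧
          Integrable (fun x => (w₂ x t - v₂ x t) ^ 2)) →
        (∀ t ∈ Set.Icc (0 : ℝ) T,
          Tendsto (fun x => w₁ x t - v₁ x t) atTop (nhds 0) ∧
          Tendsto (fun x => w₁ x t - v₁ x t) atBot (nhds 0) ∧
          Tendsto (fun x => w₂ x t - v₂ x t) atTop (nhds 0) ∧
          Tendsto (fun x => w₂ x t - v₂ x t) atBot (nhds 0)) →
        (∀ t₀ t₁ : ℝ, 0 ≤ t₀ → t₀ ≤ t₁ → t₁ ≤ T →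
          ∃ g : ℝ → ℝ, Integrable g ∧
            ∀ x : ℝ, ∀ t ∈ Set.Icc t₀ t₁,
              |(w₁ x t - v₁ x t) * deriv (fun s => w₁ x s - v₁ x s) t|
                + |(w₂ x t - v₂ x t) * deriv (fun s => w₂ x s - v₂ x s) t| ≤ g x) →
        ∀ t ∈ Set.Icc (0 : ℝ) T,
          (∫ x : ℝ, ((w₁ x t - v₁ x t) ^ 2 + (w₂ x t - v₂ x t) ^ 2))
            ≤ Real.exp (C * t) *
                ∫ x : ℝ, ((w₁ x 0 - v₁ x 0) ^ 2 + (w₂ x 0 - v₂ x 0) ^ 2) := by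
  refine ⟨2 * (2 * L), fun N₀ hz₁ hz₂ T w₁ w₂ v₁ v₂ hw hv hint hdecay hdom t ht => ?_⟩
  obtain ⟨g, hg_int, hg⟩ := hdom 0 T le_rfl (ht.1.trans ht.2) le_rfl
  have h := integral_sq_add_sq_le_exp_mul (K := 2 * L)
    (e₁ := fun x s => w₁ x s - v₁ x s) (e₂ := fun x s => w₂ x s - v₂ x s)
    (hw.1.sub hv.1) (hw.2.1.sub hv.2.1)
    (fun x s hs => (hw.deriv_sub_eq hv hs x).1) (fun x s hs => (hw.deriv_sub_eq hv hs x).2)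
    (fun x s _ => abs_mul_add_mul_le_of_abs_le_mul_sqrt
      ((abs_neg _).trans_le (hz₂ (w₁ x s, w₂ x s) (v₁ x s, v₂ x s)))
      (hz₁ (w₁ x s, w₂ x s) (v₁ x s, v₂ x s)))
    hint (fun s hs => hdecay s (Ioo_subset_Icc_self hs)) hg_int
    (fun x s hs => hg x s (Ioo_subset_Icc_self hs)) ht
  rwa [sub_zero] at h

/-- L² stability: if `z₁(u,v) = N(u,v)·u` and `z₂(u,v) = N(u,v)·v`
are globally Lipschitz with constant `L` (Euclidean norm), then there is a
constant `C` depending only on `L` such that for any two classical solutions of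
system (W) whose difference `(e₁, e₂)` is square-integrable, decays at `±∞`, and
whose `|eᵢ·∂ₜeᵢ|` is dominated on compact time intervals by an integrable
function of `x`, one has
`∫ (e₁² + e₂²)(·,t) ≤ e^{Ct} · ∫ (e₁² + e₂²)(·,0)` for `t ∈ [0,T]`. -/
theorem stmt11 (L : ℝ) (hL : 0 ≤ L) :
    ∃ C : ℝ, ∀ N₀ : ℝ → ℝ,
      (∀ p q : ℝ × ℝ,
        |Ncoef N₀ p.1 p.2 * p.1 - Ncoef N₀ q.1 q.2 * q.1|
          ≤ L * Real.sqrt ((p.1 - q.1) ^ 2 + (p.2 - q.2) ^ 2)) →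
      (∀ p q : ℝ × ℝ,
        |Ncoef N₀ p.1 p.2 * p.2 - Ncoef N₀ q.1 q.2 * q.2|
          ≤ L * Real.sqrt ((p.1 - q.1) ^ 2 + (p.2 - q.2) ^ 2)) →
      ∀ (T : ℝ) (w₁ w₂ v₁ v₂ : ℝ → ℝ → ℝ),
        IsSolW N₀ T w₁ w₂ → IsSolW N₀ T v₁ v₂ →
        (∀ t ∈ Set.Icc (0 : ℝ) T,
          Integrable (fun x => (w₁ x t - v₁ x t) ^ 2) ∧
          Integrable (fun x => (w₂ x t - v₂ x t) ^ 2)) →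
        (∀ t ∈ Set.Icc (0 : ℝ) T,
          Tendsto (fun x => w₁ x t - v₁ x t) atTop (nhds 0) ∧
          Tendsto (fun x => w₁ x t - v₁ x t) atBot (nhds 0) ∧
          Tendsto (fun x => w₂ x t - v₂ x t) atTop (nhds 0) ∧
          Tendsto (fun x => w₂ x t - v₂ x t) atBot (nhds 0)) →
        (∀ t₀ t₁ : ℝ, 0 ≤ t₀ → t₀ ≤ t₁ → t₁ ≤ T →
          ∃ g : ℝ → ℝ, Integrable g ∧
            ∀ x : ℝ, ∀ t ∈ Set.Icc t₀ t₁,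
              |(w₁ x t - v₁ x t) * deriv (fun s => w₁ x s - v₁ x s) t|
                + |(w₂ x t - v₂ x t) * deriv (fun s => w₂ x s - v₂ x s) t| ≤ g x) →
        ∀ t ∈ Set.Icc (0 : ℝ) T,
          (∫ x : ℝ, ((w₁ x t - v₁ x t) ^ 2 + (w₂ x t - v₂ x t) ^ 2))
            ≤ Real.exp (C * t) *
                ∫ x : ℝ, ((w₁ x 0 - v₁ x 0) ^ 2 + (w₂ x 0 - v₂ x 0) ^ 2) :=
  stmt11_general L
end
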